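/- If x, y, z ∈ ℝ^d with nonnegative coordinates satisfy |x - y| > 2|x - z|, then for every s ∈ [-1,1]^d, (1/4)·q±(x,y,s) ≤ q±(z,y,s) ≤ 4·q±(x,y,s), where q±(x,y,s) = |x|² + |y|² ± 2 Σᵢ xᵢyᵢsᵢ. -/

import Mathlib

open Real

def qPlus {d : ℕ} (x y s : Fin d → ℝ) : ℝ :=
  ∑ i, (x i)^2 + ∑ i, (y i)^2 + 2 * ∑ i, x i * y i * s i

def qMinus {d : ℕ} (x y s : Fin d → ℝ) : ℝ :=
  ∑ i, (x i)^2 + ∑ i, (y i)^2 - 2 * ∑ i, x i * y i * s i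

/-!
For `|sᵢ| ≤ 1` the quadratic form is a squared Euclidean distance in `ℝ^(2d)`:
`q₊(w, y, s) = ∑ᵢ (wᵢ + sᵢyᵢ)² + ∑ᵢ yᵢ²(1 - sᵢ²) = |embed w - center y s|²`, where
`embed w = (w, 0)` is isometric and `center y s = (-s ⊙ y, y ⊙ √(1 - s²))`. For nonnegative `x, y`
and `sᵢ ≥ -1` also `|x - y|² ≤ q₊(x, y, s)`, so `|embed x - embed z| = |x - z|` is at most half of
`|embed x - center y s|`, and the triangle inequality bounds `|embed z - center y s|` between one half
and three halves of it. Finally `q₋(x, y, s) = q₊(x, y, -s)`.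
-/

theorem sq_dist_bounds_of_two_mul_dist_le {E : Type*} [PseudoMetricSpace E] {x y z : E}
    (h : 2 * dist x z ≤ dist x y) :
    (1/4) * dist x y ^ 2 ≤ dist z y ^ 2 ∧ dist z y ^ 2 ≤ 4 * dist x y ^ 2 := by
  have hzy := dist_triangle z x y
  have hxy := dist_triangle x z y
  have hzx := dist_comm z x
  have := dist_nonneg (x := x) (y := z)
  have := dist_nonneg (x := z) (y := y)
  constructor <;> nlinarith [sq_nonneg (dist z y - dist x y)]

namespace QPlus

variable {d : ℕ}

noncomputable def embed (w : Fin d → ℝ) : EuclideanSpace ℝ (Fin d ⊕ Fin d) :=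
  WithLp.toLp 2 (Sum.elim w 0)

noncomputable def center (y s : Fin d → ℝ) : EuclideanSpace ℝ (Fin d ⊕ Fin d) :=
  WithLp.toLp 2 (Sum.elim (fun i => -(s i * y i)) (fun i => y i * √(1 - s i ^ 2)))

theorem dist_embed (x z : Fin d → ℝ) :
    dist (embed x) (embed z) = √(∑ i, (x i - z i) ^ 2) := by
  simp [embed, EuclideanSpace.dist_eq, Fintype.sum_sum_type, Real.dist_eq, sq_abs]

theorem qPlus_eq_sum (x y s : Fin d → ℝ) :
    qPlus x y s = ∑ i, (x i ^ 2 + y i ^ 2 + 2 * (x i * y i * s i)) := by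
  rw [qPlus, Finset.mul_sum, ← Finset.sum_add_distrib, ← Finset.sum_add_distrib]

theorem qPlus_eq_dist_sq (w y : Fin d → ℝ) {s : Fin d → ℝ} (hs : ∀ i, |s i| ≤ 1) :
    qPlus w y s = dist (embed w) (center y s) ^ 2 := by
  have hs2 (i : Fin d) : 0 ≤ 1 - s i ^ 2 := by
    nlinarith [abs_le.mp (hs i)]
  rw [EuclideanSpace.dist_eq, sq_sqrt (by positivity), Fintype.sum_sum_type,
    ← Finset.sum_add_distrib, qPlus_eq_sum]
  refine Finset.sum_congr rfl fun i _ => ?_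
  simp only [embed, center, PiLp.toLp_apply, Sum.elim_inl, Sum.elim_inr, Pi.zero_apply,
    Real.dist_eq, sq_abs]
  rw [zero_sub, neg_sq, mul_pow, sq_sqrt (hs2 i)]
  ring

theorem sum_sub_sq_le_qPlus {x y s : Fin d → ℝ} (hx : ∀ i, 0 ≤ x i) (hy : ∀ i, 0 ≤ y i)
    (hs : ∀ i, -1 ≤ s i) :
    ∑ i, (x i - y i) ^ 2 ≤ qPlus x y s := by
  rw [qPlus_eq_sum]
  refine Finset.sum_le_sum fun i _ => ?_
  nlinarith [mul_nonneg (mul_nonneg (hx i) (hy i)) (neg_le_iff_add_nonneg.mp (hs i))]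

theorem qPlus_bounds {x y z s : Fin d → ℝ} (hx : ∀ i, 0 ≤ x i) (hy : ∀ i, 0 ≤ y i)
    (hs : ∀ i, |s i| ≤ 1)
    (h : 2 * √(∑ i, (x i - z i) ^ 2) < √(∑ i, (x i - y i) ^ 2)) :
    (1/4) * qPlus x y s ≤ qPlus z y s ∧ qPlus z y s ≤ 4 * qPlus x y s := by
  have hxy : √(∑ i, (x i - y i) ^ 2) ≤ dist (embed x) (center y s) := by
    rw [← sqrt_sq dist_nonneg, ← qPlus_eq_dist_sq x y hs]
    exact sqrt_le_sqrt (sum_sub_sq_le_qPlus hx hy fun i => (abs_le.mp (hs i)).1)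
  rw [qPlus_eq_dist_sq x y hs, qPlus_eq_dist_sq z y hs]
  exact sq_dist_bounds_of_two_mul_dist_le (by rw [dist_embed]; linarith)

end QPlus

theorem qMinus_eq_qPlus_neg {d : ℕ} (x y s : Fin d → ℝ) :
    qMinus x y s = qPlus x y (-s) := by
  simp only [qMinus, qPlus, Pi.neg_apply, mul_neg, Finset.sum_neg_distrib]
  ring

theorem stmt4_general {d : ℕ} (x y z s : Fin d → ℝ)
    (hx : ∀ i, 0 ≤ x i) (hy : ∀ i, 0 ≤ y i)
    (hs : ∀ i, |s i| ≤ 1)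
    (h : Real.sqrt (∑ i, (x i - y i)^2) > 2 * Real.sqrt (∑ i, (x i - z i)^2)) :
    ((1/4) * qPlus x y s ≤ qPlus z y s ∧ qPlus z y s ≤ 4 * qPlus x y s) ∧
    ((1/4) * qMinus x y s ≤ qMinus z y s ∧ qMinus z y s ≤ 4 * qMinus x y s) := by
  have hs' (i : Fin d) : |(-s) i| ≤ 1 := by simpa using hs i
  rw [qMinus_eq_qPlus_neg x, qMinus_eq_qPlus_neg z]
  exact ⟨QPlus.qPlus_bounds hx hy hs h, QPlus.qPlus_bounds hx hy hs' h⟩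

theorem stmt4 {d : ℕ} (x y z s : Fin d → ℝ)
    (hx : ∀ i, 0 ≤ x i) (hy : ∀ i, 0 ≤ y i) (hz : ∀ i, 0 ≤ z i)
    (hs : ∀ i, |s i| ≤ 1)
    (h : Real.sqrt (∑ i, (x i - y i)^2) > 2 * Real.sqrt (∑ i, (x i - z i)^2)) :
    ((1/4) * qPlus x y s ≤ qPlus z y s ∧ qPlus z y s ≤ 4 * qPlus x y s) ∧
    ((1/4) * qMinus x y s ≤ qMinus z y s ∧ qMinus z y s ≤ 4 * qMinus x y s) :=
  stmt4_general x y z s hx hy hs h
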